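/- For all integers n ≥ 0 and k ≥ 1, the number of isomorphism classes of n-element (2+2)-free posets P with maxindist(P) ≤ k equals the number of matrices in M_n^(k). -/

import Mathlib

/-- Number of ascents in an integer sequence. -/
def ascList (l : List ℕ) : ℕ :=
  (List.range (l.length - 1)).countP (fun j => decide (l.getD j 0 < l.getD (j + 1) 0))

/-- Ascent sequence predicate. -/
def IsAscentSeq (l : List ℕ) : Prop :=
  l.getD 0 0 = 0 ∧ ∀ i, 0 < i → i < l.length → l.getD i 0 ≤ 1 + ascList (l.take i)

/-- Number of equal adjacent pairs. -/
def adjpairs (l : List ℕ) : ℕ :=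
  (List.range (l.length - 1)).countP (fun j => decide (l.getD j 0 = l.getD (j + 1) 0))

/-- All runs of equal consecutive letters have length at most `k`
(no `k+1` consecutive equal entries). -/
def RunsAtMost (k : ℕ) (l : List ℕ) : Prop :=
  ¬ ∃ i, i + k < l.length ∧ ∀ j ≤ k, l.getD (i + j) 0 = l.getD i 0

/-- Order-isomorphism of two partial orders on `Fin n`. -/
def PosetIso {n : ℕ} (P Q : PartialOrder (Fin n)) : Prop :=
  ∃ e : Fin n ≃ Fin n, ∀ a b, P.le a b ↔ Q.le (e a) (e b)

/-- The setoid of partial orders on `Fin n` satisfying `Φ`, up to isomorphism. -/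
def posetSetoid (n : ℕ) (Φ : PartialOrder (Fin n) → Prop) :
    Setoid {P : PartialOrder (Fin n) // Φ P} where
  r P Q := PosetIso P.1 Q.1
  iseqv := by
    constructor
    · intro P
      exact ⟨Equiv.refl _, fun a b => Iff.rfl⟩
    · rintro P Q ⟨e, he⟩
      refine ⟨e.symm, fun a b => ?_⟩
      simp only [he (e.symm a) (e.symm b), Equiv.apply_symm_apply]
    · rintro P Q R ⟨e, he⟩ ⟨f, hf⟩
      exact ⟨e.trans f, fun a b => (he a b).trans (hf (e a) (e b))⟩

/-- The number of isomorphism classes of partial orders on `n` elements satisfying `Φ`. -/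
noncomputable def posetCount (n : ℕ) (Φ : PartialOrder (Fin n) → Prop) : ℕ :=
  Nat.card (Quotient (posetSetoid n Φ))

/-- A poset is (2+2)-free. -/
def TwoTwoFree {n : ℕ} (P : PartialOrder (Fin n)) : Prop :=
  ¬ ∃ a b c d : Fin n, P.lt a b ∧ P.lt c d ∧
    ¬ P.le a c ∧ ¬ P.le c a ∧ ¬ P.le a d ∧ ¬ P.le d a ∧
    ¬ P.le b c ∧ ¬ P.le c b ∧ ¬ P.le b d ∧ ¬ P.le d b

/-- Two elements are indistinguishable: same strict down-set and same strict up-set. -/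
def Indist {n : ℕ} (P : PartialOrder (Fin n)) (x y : Fin n) : Prop :=
  (∀ z, P.lt z x ↔ P.lt z y) ∧ (∀ z, P.lt x z ↔ P.lt y z)

/-- Indistinguishability as a setoid. -/
def indistSetoid {n : ℕ} (P : PartialOrder (Fin n)) : Setoid (Fin n) where
  r := Indist P
  iseqv := ⟨fun _ => ⟨fun _ => Iff.rfl, fun _ => Iff.rfl⟩,
    fun h => ⟨fun z => (h.1 z).symm, fun z => (h.2 z).symm⟩,
    fun h h' => ⟨fun z => (h.1 z).trans (h'.1 z), fun z => (h.2 z).trans (h'.2 z)⟩⟩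

/-- Size of the indistinguishability class of `x`. -/
noncomputable def classSize {n : ℕ} (P : PartialOrder (Fin n)) (x : Fin n) : ℕ :=
  Nat.card {y : Fin n // Indist P x y}

/-- `maxindist(P) ≤ k`: each indistinguishability class has size at most `k`. -/
def MaxindistLe {n : ℕ} (P : PartialOrder (Fin n)) (k : ℕ) : Prop :=
  ∀ x : Fin n, classSize P x ≤ k

/-- No two distinct elements are indistinguishable. -/
def PrimitivePoset {n : ℕ} (P : PartialOrder (Fin n)) : Prop :=
  ∀ x y : Fin n, Indist P x y → x = y

/-- `rep(P)`: the minimum number of elements whose removal leaves an induced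
subposet with no pair of distinct indistinguishable elements. -/
noncomputable def repStat {n : ℕ} (P : PartialOrder (Fin n)) : ℕ :=
  sInf {m | ∃ S : Finset (Fin n), S.card = m ∧
    ∀ x ∉ S, ∀ y ∉ S, Indist P x y → x = y}

/-- The strict down-set of `x`. -/
def downSet {n : ℕ} (P : PartialOrder (Fin n)) (x : Fin n) : Set (Fin n) :=
  {z | P.lt z x}

/-- The level of `x`: the number of strict down-sets strictly contained in `D(x)`. -/
noncomputable def levelOf {n : ℕ} (P : PartialOrder (Fin n)) (x : Fin n) : ℕ :=
  {S : Set (Fin n) | (∃ z, S = downSet P z) ∧ S ⊂ downSet P x}.ncard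

/-- `levels(P)`: index of the highest level. -/
noncomputable def levelsStat {n : ℕ} (P : PartialOrder (Fin n)) : ℕ :=
  {S : Set (Fin n) | ∃ z, S = downSet P z}.ncard - 1

/-- `x` is a maximal element. -/
def IsMaximal {n : ℕ} (P : PartialOrder (Fin n)) (x : Fin n) : Prop :=
  ∀ z, ¬ P.lt x z

/-- `minmax(P)`: the minimum level of a maximal element. -/
noncomputable def minmaxStat {n : ℕ} (P : PartialOrder (Fin n)) : ℕ :=
  sInf {j | ∃ x, IsMaximal P x ∧ levelOf P x = j}

/-- Membership in `M_n`: upper triangular, no zero row or column, entries sum to `n`. -/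
def InMatM (n : ℕ) (A : Σ d : ℕ, Matrix (Fin d) (Fin d) ℕ) : Prop :=
  (∀ i j : Fin A.1, (j : ℕ) < (i : ℕ) → A.2 i j = 0) ∧
  (∀ i : Fin A.1, ∃ j, A.2 i j ≠ 0) ∧
  (∀ j : Fin A.1, ∃ i, A.2 i j ≠ 0) ∧
  (∑ i, ∑ j, A.2 i j) = n

/-- All entries are at most `k`. -/
def EntriesLe (k : ℕ) (A : Σ d : ℕ, Matrix (Fin d) (Fin d) ℕ) : Prop :=
  ∀ i j, A.2 i j ≤ k

/-- `index(A) - 1`: the least (0-based) row index with a nonzero entry in the last column. -/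
noncomputable def matIndex0 (A : Σ d : ℕ, Matrix (Fin d) (Fin d) ℕ) : ℕ :=
  sInf {i : ℕ | ∃ (h : i < A.1) (h' : A.1 - 1 < A.1), A.2 ⟨i, h⟩ ⟨A.1 - 1, h'⟩ ≠ 0}

/-- The number of nonzero entries of `A`. -/
noncomputable def matNZ (A : Σ d : ℕ, Matrix (Fin d) (Fin d) ℕ) : ℕ :=
  Nat.card {p : Fin A.1 × Fin A.1 // A.2 p.1 p.2 ≠ 0}

/-- Membership in `R_n`. -/
def InRset {n : ℕ} (π : Equiv.Perm (Fin n)) : Prop :=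
  ¬ ∃ i j k : Fin n, (j : ℕ) = (i : ℕ) + 1 ∧ (i : ℕ) + 1 < (k : ℕ) ∧
    (π k : ℕ) < (π i : ℕ) ∧ (π i : ℕ) < (π j : ℕ) ∧ (π i : ℕ) = (π k : ℕ) + 1

/-- No `k+1` consecutive letters, each one less than the previous. -/
def NoDescRun {n : ℕ} (k : ℕ) (π : Equiv.Perm (Fin n)) : Prop :=
  ¬ ∃ (i : ℕ) (h : i + k < n), ∀ j, ∀ hj : j ≤ k,
    (π ⟨i + j, by omega⟩ : ℕ) = (π ⟨i, by omega⟩ : ℕ) - j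

/-- The number of descents by one: indices `i` with `π_i = π_{i+1} + 1`. -/
noncomputable def adjdes {n : ℕ} (π : Equiv.Perm (Fin n)) : ℕ :=
  Nat.card {i : ℕ // ∃ h : i + 1 < n,
    (π ⟨i, Nat.lt_of_succ_lt h⟩ : ℕ) = (π ⟨i + 1, h⟩ : ℕ) + 1}

/-- A perfect matching, encoded as a fixed-point-free involution. -/
def IsMatching {m : ℕ} (f : Equiv.Perm (Fin m)) : Prop :=
  (∀ x, f (f x) = x) ∧ ∀ x, f x ≠ x

/-- The Stoimenow condition on a matching. -/
def IsStoimenow {m : ℕ} (f : Equiv.Perm (Fin m)) : Prop :=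
  ¬ ∃ a c : Fin m, a < f a ∧ c < f c ∧
    (((a : ℕ) = (c : ℕ) + 1 ∧ f a < f c) ∨ ((a : ℕ) < (c : ℕ) ∧ (f a : ℕ) = (f c : ℕ) + 1))

/-- There are `i, j` such that `{i+l, j+l}` is an arc for every `l = 0, …, k`. -/
def HasSimRun {m : ℕ} (k : ℕ) (f : Equiv.Perm (Fin m)) : Prop :=
  ∃ i j : ℕ, ∀ l ≤ k, ∃ (h1 : i + l < m) (h2 : j + l < m), f ⟨i + l, h1⟩ = ⟨j + l, h2⟩

/-- After removing the arcs with endpoints in `A`, no pair of similar arcs remains. -/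
def SimilarFree {m : ℕ} (f : Equiv.Perm (Fin m)) (A : Finset (Fin m)) : Prop :=
  ¬ ∃ (i j : ℕ) (h1 : i < m) (h2 : j < m) (h3 : i + 1 < m) (h4 : j + 1 < m),
    f ⟨i, h1⟩ = ⟨j, h2⟩ ∧ f ⟨i + 1, h3⟩ = ⟨j + 1, h4⟩ ∧
    (⟨i, h1⟩ : Fin m) ∉ A ∧ (⟨i + 1, h3⟩ : Fin m) ∉ A ∧
    (⟨j, h2⟩ : Fin m) ∉ A ∧ (⟨j + 1, h4⟩ : Fin m) ∉ A

/-- `echords(M)`: minimum number of arcs whose removal leaves no similar pair. -/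
noncomputable def echords {m : ℕ} (f : Equiv.Perm (Fin m)) : ℕ :=
  sInf {c | ∃ A : Finset (Fin m), (∀ x ∈ A, f x ∈ A) ∧ A.card = 2 * c ∧ SimilarFree f A}


/-!
A finite poset is (2+2)-free exactly when its strict down-sets form a chain
`D₀ ⊂ D₁ ⊂ ⋯ ⊂ D_{d-1}`. Sending `x` to the interval `[l x, r x]`, where `D(x) = D_{l x}` and
`D_{r x}` is the last down-set not containing `x`, gives an interval representation
(`x < y ↔ r x < l y`) in which every point of `[0, d)` is both a left and a right endpoint.
Such a canonical representation is unique, and the matrix whose `(i, j)` entry counts the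
elements with interval `[i, j]` lies in `M_n`. Conversely a matrix of `M_n` is the matrix of the
poset of its cells, counted with multiplicity, ordered by the same rule. Two elements are
indistinguishable iff they have the same interval, so `maxindist(P)` is the largest entry.
-/

open Finset

noncomputable section

open scoped Classical

theorem eq_of_isLowerSet_range_of_lt_iff_lt {β : Type*} {f g : β → ℕ}
    (hf : IsLowerSet (Set.range f)) (hg : IsLowerSet (Set.range g))
    (h : ∀ a b, f a < f b ↔ g a < g b) : f = g := by
  suffices key : ∀ {f g : β → ℕ}, IsLowerSet (Set.range f) →
      (∀ a b, f a < f b ↔ g a < g b) → ∀ a, f a ≤ g a from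
    funext fun a => le_antisymm (key hf h a) (key hg (fun a b => (h a b).symm) a)
  intro f g hf h a
  induction hfa : f a using Nat.strong_induction_on generalizing a with
  | _ v ih =>
    rcases v with _ | v
    · exact Nat.zero_le _
    · obtain ⟨b, hb⟩ := hf (Nat.le_succ v) ⟨a, hfa⟩
      have hgb := ih v (Nat.lt_succ_self v) b hb
      have hlt := (h b a).1 (by omega)
      omega

structure IsCanonicalRep {α : Type*} (lt : α → α → Prop) (d : ℕ) (l r : α → ℕ) : Prop where
  left_le_right : ∀ x, l x ≤ r x
  right_lt : ∀ x, r x < d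
  lt_iff : ∀ x y, lt x y ↔ r x < l y
  exists_left_eq : ∀ i < d, ∃ x, l x = i
  exists_right_eq : ∀ j < d, ∃ x, r x = j

def intervalMatrix {α : Type*} [Fintype α] (d : ℕ) (l r : α → ℕ) :
    Σ d : ℕ, Matrix (Fin d) (Fin d) ℕ :=
  ⟨d, fun i j => #{x | l x = i ∧ r x = j}⟩

theorem intervalMatrix_comp_equiv {α β : Type*} [Fintype α] [Fintype β] (d : ℕ) (l r : α → ℕ)
    (e : β ≃ α) : intervalMatrix d (l ∘ e) (r ∘ e) = intervalMatrix d l r := by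
  unfold intervalMatrix
  congr
  funext i j
  exact card_equiv e (by simp)

namespace IsCanonicalRep

variable {α : Type*} {lt : α → α → Prop} {d : ℕ} {l r : α → ℕ}

theorem left_lt (h : IsCanonicalRep lt d l r) (x : α) : l x < d :=
  (h.left_le_right x).trans_lt (h.right_lt x)

theorem left_lt_left_iff (h : IsCanonicalRep lt d l r) {x y : α} :
    l x < l y ↔ ∃ z, lt z y ∧ ¬ lt z x := by
  simp only [h.lt_iff]
  constructor
  · intro hxy
    obtain ⟨z, hz⟩ := h.exists_right_eq _ (h.left_lt x)
    exact ⟨z, by omega⟩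
  · rintro ⟨z, hzy, hzx⟩
    omega

theorem right_lt_right_iff (h : IsCanonicalRep lt d l r) {x y : α} :
    r x < r y ↔ ∃ z, lt x z ∧ ¬ lt y z := by
  simp only [h.lt_iff]
  constructor
  · intro hxy
    obtain ⟨z, hz⟩ := h.exists_left_eq _ (h.right_lt y)
    exact ⟨z, by omega⟩
  · rintro ⟨z, hxz, hyz⟩
    omega

theorem left_eq_left_iff (h : IsCanonicalRep lt d l r) {x y : α} :
    l x = l y ↔ ∀ z, lt z x ↔ lt z y := by
  rw [le_antisymm_iff, ← not_lt, ← not_lt, h.left_lt_left_iff, h.left_lt_left_iff]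
  grind

theorem right_eq_right_iff (h : IsCanonicalRep lt d l r) {x y : α} :
    r x = r y ↔ ∀ z, lt x z ↔ lt y z := by
  rw [le_antisymm_iff, ← not_lt, ← not_lt, h.right_lt_right_iff, h.right_lt_right_iff]
  grind

theorem isLowerSet_range_left (h : IsCanonicalRep lt d l r) : IsLowerSet (Set.range l) := by
  rintro _ i hi ⟨x, rfl⟩
  exact h.exists_left_eq i (hi.trans_lt (h.left_lt x))

theorem isLowerSet_range_right (h : IsCanonicalRep lt d l r) : IsLowerSet (Set.range r) := by
  rintro _ j hj ⟨x, rfl⟩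
  exact h.exists_right_eq j (hj.trans_lt (h.right_lt x))

theorem unique {d' : ℕ} {l' r' : α → ℕ} (h : IsCanonicalRep lt d l r)
    (h' : IsCanonicalRep lt d' l' r') : d = d' ∧ l = l' ∧ r = r' := by
  obtain rfl : l = l' := eq_of_isLowerSet_range_of_lt_iff_lt h.isLowerSet_range_left
    h'.isLowerSet_range_left fun a b => by rw [h.left_lt_left_iff, h'.left_lt_left_iff]
  obtain rfl : r = r' := eq_of_isLowerSet_range_of_lt_iff_lt h.isLowerSet_range_right
    h'.isLowerSet_range_right fun a b => by rw [h.right_lt_right_iff, h'.right_lt_right_iff]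
  refine ⟨le_antisymm ?_ ?_, rfl, rfl⟩ <;> by_contra! hd
  · obtain ⟨x, hx⟩ := h.exists_left_eq d' hd
    exact (h'.left_lt x).ne hx
  · obtain ⟨x, hx⟩ := h'.exists_left_eq d hd
    exact (h.left_lt x).ne hx

theorem comp {β : Type*} {lt' : β → β → Prop} (h : IsCanonicalRep lt d l r) (e : β ≃ α)
    (he : ∀ a b, lt' a b ↔ lt (e a) (e b)) : IsCanonicalRep lt' d (l ∘ e) (r ∘ e) where
  left_le_right x := h.left_le_right (e x)
  right_lt x := h.right_lt (e x)
  lt_iff a b := (he a b).trans (h.lt_iff _ _)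
  exists_left_eq i hi := let ⟨x, hx⟩ := h.exists_left_eq i hi; ⟨e.symm x, by simpa using hx⟩
  exists_right_eq j hj := let ⟨x, hx⟩ := h.exists_right_eq j hj; ⟨e.symm x, by simpa using hx⟩

theorem intervalMatrix_eq [Fintype α] {d' : ℕ} {l' r' : α → ℕ} (h : IsCanonicalRep lt d l r)
    (h' : IsCanonicalRep lt d' l' r') : intervalMatrix d l r = intervalMatrix d' l' r' := by
  obtain ⟨rfl, rfl, rfl⟩ := h.unique h'
  rfl

def cell (h : IsCanonicalRep lt d l r) (x : α) : Fin d × Fin d :=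
  (⟨l x, h.left_lt x⟩, ⟨r x, h.right_lt x⟩)

theorem card_cell_fiber [Fintype α] (h : IsCanonicalRep lt d l r) (p : Fin d × Fin d) :
    #{x | h.cell x = p} = (intervalMatrix d l r).2 p.1 p.2 := by
  simp only [intervalMatrix, cell, Prod.ext_iff, Fin.ext_iff]

theorem inMatM [Fintype α] {n : ℕ} (h : IsCanonicalRep lt d l r) (hn : Fintype.card α = n) :
    InMatM n (intervalMatrix d l r) := by
  refine ⟨fun i j hji => ?_, fun i => ?_, fun j => ?_, ?_⟩
  · refine card_eq_zero.2 (filter_eq_empty_iff.2 fun x _ hx => ?_)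
    have := h.left_le_right x
    omega
  · obtain ⟨x, hx⟩ := h.exists_left_eq i i.isLt
    refine ⟨(h.cell x).2, ne_of_gt ?_⟩
    rw [← show (h.cell x).1 = i from Fin.ext hx, ← h.card_cell_fiber, card_pos]
    exact ⟨x, by simp⟩
  · obtain ⟨x, hx⟩ := h.exists_right_eq j j.isLt
    refine ⟨(h.cell x).1, ne_of_gt ?_⟩
    rw [← show (h.cell x).2 = j from Fin.ext hx, ← h.card_cell_fiber, card_pos]
    exact ⟨x, by simp⟩
  · rw [← hn, ← card_univ, card_eq_sum_card_fiberwise (f := h.cell) (t := univ) (by simp),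
      Fintype.sum_prod_type]
    simp only [h.card_cell_fiber]
    rfl

end IsCanonicalRep

section Downsets

variable {α : Type*} [PartialOrder α] [Fintype α]

def strictDown (x : α) : Finset α := {z | z < x}

variable (α) in
def downsets : Finset (Finset α) := univ.image strictDown

def downRank (S : Finset α) : ℕ := #{T ∈ downsets α | T ⊂ S}

def leftEnd (x : α) : ℕ := downRank (strictDown x)

/-- The subtraction does not truncate: `strictDown x` is a down-set not containing `x`. -/
def rightEnd (x : α) : ℕ := #{S ∈ downsets α | x ∉ S} - 1

theorem mem_strictDown {x z : α} : z ∈ strictDown x ↔ z < x := by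
  simp [strictDown]

theorem strictDown_mem_downsets (x : α) : strictDown x ∈ downsets α :=
  mem_image_of_mem _ (mem_univ x)

theorem mem_downsets {S : Finset α} : S ∈ downsets α ↔ ∃ x, strictDown x = S := by
  simp [downsets]

theorem downRank_mono {S T : Finset α} (h : S ⊆ T) : downRank S ≤ downRank T :=
  card_le_card (monotone_filter_right _ fun _ _ hU => hU.trans_subset h)

theorem downRank_lt_downRank {S T : Finset α} (hS : S ∈ downsets α) (h : S ⊂ T) :
    downRank S < downRank T := by
  refine card_lt_card ((ssubset_iff_of_subset
    (monotone_filter_right _ fun _ _ hU => hU.trans h)).2 ⟨S, ?_, ?_⟩) <;> simp [hS, h]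

theorem downRank_lt_card {S : Finset α} (hS : S ∈ downsets α) : downRank S < #(downsets α) :=
  card_lt_card (filter_ssubset.2 ⟨S, hS, lt_irrefl S⟩)

theorem one_le_card_notMem (x : α) : 1 ≤ #{S ∈ downsets α | x ∉ S} :=
  card_pos.2 ⟨strictDown x, by simp [strictDown_mem_downsets, mem_strictDown]⟩

theorem rightEnd_lt_card (x : α) : rightEnd x < #(downsets α) := by
  have := card_le_card (filter_subset (fun S => x ∉ S) (downsets α))
  have := one_le_card_notMem x
  unfold rightEnd
  omega

theorem leftEnd_le_rightEnd_of_not_lt {x y : α} (h : ¬ x < y) : leftEnd y ≤ rightEnd x := by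
  have hsub : insert (strictDown y) {T ∈ downsets α | T ⊂ strictDown y} ⊆
      {S ∈ downsets α | x ∉ S} := by
    intro S hS
    simp only [mem_insert, mem_filter] at hS ⊢
    rcases hS with rfl | ⟨hS, hSy⟩
    · exact ⟨strictDown_mem_downsets y, fun hx => h (mem_strictDown.1 hx)⟩
    · exact ⟨hS, fun hx => h (mem_strictDown.1 (hSy.subset hx))⟩
  have := card_le_card hsub
  rw [card_insert_of_notMem (by simp)] at this
  unfold leftEnd downRank rightEnd
  omega

section Chain

variable (hc : IsChain (· ⊆ ·) (downsets α : Set (Finset α)))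
include hc

theorem rightEnd_lt_leftEnd_of_lt {x y : α} (h : x < y) : rightEnd x < leftEnd y := by
  have hsub : {S ∈ downsets α | x ∉ S} ⊆ {T ∈ downsets α | T ⊂ strictDown y} := by
    intro S hS
    simp only [mem_filter] at hS ⊢
    refine ⟨hS.1, (hc.total hS.1 (strictDown_mem_downsets y)).resolve_right ?_ |>.ssubset_of_ne ?_⟩
    · exact fun hyS => hS.2 (hyS (mem_strictDown.2 h))
    · rintro rfl
      exact hS.2 (mem_strictDown.2 h)
  have := card_le_card hsub
  have := one_le_card_notMem x
  unfold leftEnd downRank rightEnd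
  omega

theorem lt_iff_rightEnd_lt_leftEnd {x y : α} : x < y ↔ rightEnd x < leftEnd y :=
  ⟨rightEnd_lt_leftEnd_of_lt hc, fun h => by_contra fun h' =>
    (leftEnd_le_rightEnd_of_not_lt h').not_gt h⟩

theorem downRank_injOn : Set.InjOn downRank (downsets α : Set (Finset α)) := by
  intro S hS T hT hST
  by_contra hne
  rcases hc.total hS hT with h | h
  · exact (downRank_lt_downRank hS (h.ssubset_of_ne hne)).ne hST
  · exact (downRank_lt_downRank hT (h.ssubset_of_ne (Ne.symm hne))).ne' hST

theorem exists_leftEnd_eq {i : ℕ} (hi : i < #(downsets α)) : ∃ x : α, leftEnd x = i := by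
  obtain ⟨S, hS, hSi⟩ := surjOn_of_injOn_of_card_le (t := range #(downsets α)) downRank
    (fun S hS => mem_range.2 (downRank_lt_card hS)) (downRank_injOn hc) (by simp)
    (mem_range.2 hi)
  obtain ⟨x, rfl⟩ := mem_downsets.1 hS
  exact ⟨x, hSi⟩

theorem exists_rightEnd_eq {j : ℕ} (hj : j < #(downsets α)) : ∃ x : α, rightEnd x = j := by
  rcases Nat.lt_or_ge (j + 1) #(downsets α) with hj' | hj'
  · obtain ⟨y, hy⟩ := exists_leftEnd_eq hc hj'
    obtain ⟨y', hy'⟩ := exists_leftEnd_eq hc hj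
    have hnsub : ¬ strictDown y ⊆ strictDown y' := fun hsub => by
      have := downRank_mono hsub
      unfold leftEnd at hy hy'
      omega
    obtain ⟨z, hzy, hzy'⟩ := not_subset.1 hnsub
    have h1 := rightEnd_lt_leftEnd_of_lt hc (mem_strictDown.1 hzy)
    have h2 := leftEnd_le_rightEnd_of_not_lt (mt mem_strictDown.2 hzy')
    exact ⟨z, by omega⟩
  · obtain ⟨x, hx⟩ := exists_leftEnd_eq hc hj
    have h1 := leftEnd_le_rightEnd_of_not_lt (lt_irrefl x)
    have h2 := rightEnd_lt_card x
    exact ⟨x, by omega⟩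

theorem isCanonicalRep_of_isChain :
    IsCanonicalRep (· < ·) #(downsets α) (leftEnd (α := α)) rightEnd where
  left_le_right x := leftEnd_le_rightEnd_of_not_lt (lt_irrefl x)
  right_lt := rightEnd_lt_card
  lt_iff _ _ := lt_iff_rightEnd_lt_leftEnd hc
  exists_left_eq _ := exists_leftEnd_eq hc
  exists_right_eq _ := exists_rightEnd_eq hc

end Chain

end Downsets

theorem twoPlusTwo_of_not_lt {α : Type*} [PartialOrder α] {a b c d : α} (hab : a < b)
    (hcd : c < d) (had : ¬ a < d) (hcb : ¬ c < b) :
    ¬ a ≤ c ∧ ¬ c ≤ a ∧ ¬ a ≤ d ∧ ¬ d ≤ a ∧ ¬ b ≤ c ∧ ¬ c ≤ b ∧ ¬ b ≤ d ∧ ¬ d ≤ b := by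
  refine ⟨?_, ?_, ?_, ?_, ?_, ?_, ?_, ?_⟩ <;> order

theorem exists_isCanonicalRep_of_twoTwoFree {n : ℕ} {P : PartialOrder (Fin n)}
    (hP : TwoTwoFree P) : ∃ d l r, IsCanonicalRep P.lt d l r := by
  let := P
  refine ⟨_, _, _, isCanonicalRep_of_isChain ?_⟩
  rintro S hS T hT -
  obtain ⟨x, rfl⟩ := mem_downsets.1 hS
  obtain ⟨y, rfl⟩ := mem_downsets.1 hT
  by_contra! hxy
  obtain ⟨a, hax, hay⟩ := not_subset.1 hxy.1
  obtain ⟨c, hcy, hcx⟩ := not_subset.1 hxy.2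
  rw [mem_strictDown] at hax hay hcy hcx
  exact hP ⟨a, x, c, y, hax, hcy, twoPlusTwo_of_not_lt hax hcy hay hcx⟩

abbrev intervalOrder {α : Type*} (l r : α → ℕ) (h : ∀ x, l x ≤ r x) : PartialOrder α where
  le x y := x = y ∨ r x < l y
  lt x y := r x < l y
  le_refl _ := Or.inl rfl
  le_trans x y z := by
    rintro (rfl | hxy) (rfl | hyz)
    exacts [Or.inl rfl, Or.inr hyz, Or.inr hxy, Or.inr (by have := h y; omega)]
  le_antisymm x y := by
    rintro (rfl | hxy) (hyx | hyx)
    exacts [rfl, rfl, hyx.symm, by have := h x; have := h y; omega]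
  lt_iff_le_not_ge x y := by
    have := h x
    have := h y
    constructor
    · intro hxy
      exact ⟨Or.inr hxy, by rintro (rfl | hyx) <;> omega⟩
    · rintro ⟨rfl | hxy, hyx⟩
      exacts [absurd (Or.inl rfl) hyx, hxy]

theorem posetIso_intervalOrder {n : ℕ} {l r l' r' : Fin n → ℕ} (h : ∀ x, l x ≤ r x)
    (h' : ∀ x, l' x ≤ r' x) (e : Fin n ≃ Fin n) (hl : ∀ x, l' (e x) = l x)
    (hr : ∀ x, r' (e x) = r x) : PosetIso (intervalOrder l r h) (intervalOrder l' r' h') :=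
  ⟨e, fun a b => by
    change a = b ∨ r a < l b ↔ e a = e b ∨ r' (e a) < l' (e b)
    rw [hl, hr, e.apply_eq_iff_eq]⟩

theorem lt_iff_of_le_iff {α β : Type*} {P : PartialOrder α} {Q : PartialOrder β}
    {e : α → β} (he : ∀ a b, P.le a b ↔ Q.le (e a) (e b)) (a b : α) :
    P.lt a b ↔ Q.lt (e a) (e b) := by
  rw [P.lt_iff_le_not_ge, Q.lt_iff_le_not_ge, he, he]

namespace IsCanonicalRep

variable {n d : ℕ} {P : PartialOrder (Fin n)} {l r : Fin n → ℕ}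

theorem eq_intervalOrder (h : IsCanonicalRep P.lt d l r) :
    P = intervalOrder l r h.left_le_right :=
  PartialOrder.ext_lt h.lt_iff

theorem twoTwoFree (h : IsCanonicalRep P.lt d l r) : TwoTwoFree P := by
  rintro ⟨a, b, c, d', hab, hcd, -, -, had, -, -, hcb, -, -⟩
  have had' : ¬ P.lt a d' := fun hlt => had hlt.le
  have hcb' : ¬ P.lt c b := fun hlt => hcb hlt.le
  rw [h.lt_iff] at hab hcd had' hcb'
  omega

theorem indist_iff (h : IsCanonicalRep P.lt d l r) {x y : Fin n} :
    Indist P x y ↔ l x = l y ∧ r x = r y := by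
  rw [h.left_eq_left_iff, h.right_eq_right_iff]
  rfl

theorem classSize_eq (h : IsCanonicalRep P.lt d l r) (x : Fin n) :
    classSize P x = (intervalMatrix d l r).2 (h.cell x).1 (h.cell x).2 := by
  rw [← h.card_cell_fiber, classSize, Nat.card_eq_fintype_card, Fintype.card_subtype]
  congr 1
  ext y
  simp only [mem_filter, mem_univ, true_and, h.indist_iff, cell, Prod.ext_iff, Fin.ext_iff, eq_comm]

theorem maxindistLe_iff (h : IsCanonicalRep P.lt d l r) {k : ℕ} :
    MaxindistLe P k ↔ EntriesLe k (intervalMatrix d l r) := by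
  refine ⟨fun hk (i j : Fin d) => ?_, fun hk x => h.classSize_eq x ▸ hk _ _⟩
  rcases (#{x | h.cell x = (i, j)}).eq_zero_or_pos with hij | hij
  · rw [h.card_cell_fiber (i, j)] at hij
    exact hij ▸ Nat.zero_le k
  · obtain ⟨x, hx⟩ := card_pos.1 hij
    have hx : h.cell x = (i, j) := by simpa using hx
    have hsize := h.classSize_eq x
    rw [hx] at hsize
    exact hsize ▸ hk x

end IsCanonicalRep

section MatrixPoset

variable {n : ℕ} {A : Σ d : ℕ, Matrix (Fin d) (Fin d) ℕ}

abbrev Cells (A : Σ d : ℕ, Matrix (Fin d) (Fin d) ℕ) : Type :=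
  Σ p : Fin A.1 × Fin A.1, Fin (A.2 p.1 p.2)

theorem card_cells : Fintype.card (Cells A) = ∑ i, ∑ j, A.2 i j := by
  simp only [Fintype.card_sigma, Fintype.card_fin, Fintype.sum_prod_type]

def cellEquiv (hA : InMatM n A) : Fin n ≃ Cells A :=
  Fintype.equivOfCardEq (by rw [card_cells, hA.2.2.2, Fintype.card_fin])

def cellOf (hA : InMatM n A) (x : Fin n) : Fin A.1 × Fin A.1 :=
  (cellEquiv hA x).1

theorem card_cellOf_fiber (hA : InMatM n A) (p : Fin A.1 × Fin A.1) :
    #{x | cellOf hA x = p} = A.2 p.1 p.2 := by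
  rw [← Fintype.card_subtype, ← Fintype.card_fin (A.2 p.1 p.2)]
  exact Fintype.card_congr (((cellEquiv hA).subtypeEquiv fun _ => Iff.rfl).trans
    (Equiv.sigmaSubtype p))

theorem exists_cellOf_eq (hA : InMatM n A) {p : Fin A.1 × Fin A.1} (hp : A.2 p.1 p.2 ≠ 0) :
    ∃ x, cellOf hA x = p := by
  rw [← card_cellOf_fiber hA, ← pos_iff_ne_zero, card_pos] at hp
  obtain ⟨x, hx⟩ := hp
  exact ⟨x, by simpa using hx⟩

theorem cellOf_fst_le_snd (hA : InMatM n A) (x : Fin n) : (cellOf hA x).1 ≤ (cellOf hA x).2 :=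
  not_lt.1 fun hlt => (cellEquiv hA x).2.pos.ne' (hA.1 _ _ hlt)

abbrev matPoset (hA : InMatM n A) : PartialOrder (Fin n) :=
  intervalOrder (fun x => (cellOf hA x).1) (fun x => (cellOf hA x).2) (cellOf_fst_le_snd hA)

theorem isCanonicalRep_matPoset (hA : InMatM n A) :
    IsCanonicalRep (matPoset hA).lt A.1 (fun x => (cellOf hA x).1)
      (fun x => (cellOf hA x).2) where
  left_le_right := cellOf_fst_le_snd hA
  right_lt x := (cellOf hA x).2.isLt
  lt_iff _ _ := Iff.rfl
  exists_left_eq i hi := by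
    obtain ⟨j, hj⟩ := hA.2.1 ⟨i, hi⟩
    obtain ⟨x, hx⟩ := exists_cellOf_eq hA (p := (⟨i, hi⟩, j)) hj
    exact ⟨x, by rw [hx]⟩
  exists_right_eq j hj := by
    obtain ⟨i, hi⟩ := hA.2.2.1 ⟨j, hj⟩
    obtain ⟨x, hx⟩ := exists_cellOf_eq hA (p := (i, ⟨j, hj⟩)) hi
    exact ⟨x, by rw [hx]⟩

theorem intervalMatrix_matPoset (hA : InMatM n A) :
    intervalMatrix A.1 (fun x => (cellOf hA x).1) (fun x => (cellOf hA x).2) = A := by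
  refine Sigma.ext rfl (heq_of_eq (funext₂ fun (i j : Fin A.1) => ?_))
  rw [← card_cellOf_fiber hA (i, j)]
  simp only [intervalMatrix, Prod.ext_iff, Fin.ext_iff]

theorem matPoset_twoTwoFree (hA : InMatM n A) : TwoTwoFree (matPoset hA) :=
  (isCanonicalRep_matPoset hA).twoTwoFree

theorem matPoset_maxindistLe (hA : InMatM n A) {k : ℕ} (hk : EntriesLe k A) :
    MaxindistLe (matPoset hA) k :=
  (isCanonicalRep_matPoset hA).maxindistLe_iff.2 ((intervalMatrix_matPoset hA).symm ▸ hk)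

theorem eq_of_posetIso_matPoset {B : Σ d : ℕ, Matrix (Fin d) (Fin d) ℕ} (hA : InMatM n A)
    (hB : InMatM n B) (hAB : PosetIso (matPoset hA) (matPoset hB)) : A = B := by
  obtain ⟨e, he⟩ := hAB
  have hrep := (isCanonicalRep_matPoset hB).comp e
    (lt_iff_of_le_iff (P := matPoset hA) (Q := matPoset hB) he)
  calc A = intervalMatrix A.1 (fun x => (cellOf hA x).1) (fun x => (cellOf hA x).2) :=
        (intervalMatrix_matPoset hA).symm
    _ = intervalMatrix B.1 _ _ := (isCanonicalRep_matPoset hA).intervalMatrix_eq hrep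
    _ = intervalMatrix B.1 (fun x => (cellOf hB x).1) (fun x => (cellOf hB x).2) :=
        intervalMatrix_comp_equiv _ _ _ e
    _ = B := intervalMatrix_matPoset hB

theorem IsCanonicalRep.posetIso_matPoset {d : ℕ} {P : PartialOrder (Fin n)} {l r : Fin n → ℕ}
    (h : IsCanonicalRep P.lt d l r) (hA : InMatM n (intervalMatrix d l r)) :
    PosetIso (matPoset hA) P := by
  have hfiber (p : Fin d × Fin d) :
      Fintype.card {x // cellOf hA x = p} = Fintype.card {x // h.cell x = p} := by
    rw [Fintype.card_subtype, Fintype.card_subtype]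
    convert (card_cellOf_fiber hA p).trans (h.card_cell_fiber p).symm
  let e : Fin n ≃ Fin n := Equiv.ofFiberEquiv fun p => Fintype.equivOfCardEq (hfiber p)
  have he (x : Fin n) : h.cell (e x) = cellOf hA x := Equiv.ofFiberEquiv_map _ x
  rw [h.eq_intervalOrder]
  exact posetIso_intervalOrder _ _ e (fun x => congrArg (fun p => (p.1 : ℕ)) (he x))
    (fun x => congrArg (fun p => (p.2 : ℕ)) (he x))

end MatrixPoset

end

theorem stmt_18_general (n k : ℕ) :
    posetCount n (fun P => TwoTwoFree P ∧ MaxindistLe P k) =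
      Nat.card {A : Σ d : ℕ, Matrix (Fin d) (Fin d) ℕ // InMatM n A ∧ EntriesLe k A} := by
  refine (Nat.card_eq_of_bijective (fun A => Quotient.mk (posetSetoid n _)
    ⟨matPoset A.2.1, matPoset_twoTwoFree A.2.1, matPoset_maxindistLe A.2.1 A.2.2⟩) ⟨?_, ?_⟩).symm
  · rintro ⟨A, hA, _⟩ ⟨B, hB, _⟩ hAB
    exact Subtype.ext (eq_of_posetIso_matPoset hA hB (Quotient.exact hAB))
  · rintro ⟨P, hP, hPk⟩
    obtain ⟨d, l, r, h⟩ := exists_isCanonicalRep_of_twoTwoFree hP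
    have hA := h.inMatM (Fintype.card_fin n)
    exact ⟨⟨_, hA, h.maxindistLe_iff.1 hPk⟩, Quotient.sound (h.posetIso_matPoset hA)⟩

/-- isomorphism classes of `n`-element (2+2)-free posets `P` with
`maxindist(P) ≤ k` are equinumerous with matrices in `M_n^(k)`. -/
theorem stmt_18 (n k : ℕ) (hk : 1 ≤ k) :
    posetCount n (fun P => TwoTwoFree P ∧ MaxindistLe P k) =
      Nat.card {A : Σ d : ℕ, Matrix (Fin d) (Fin d) ℕ // InMatM n A ∧ EntriesLe k A} :=
  stmt_18_general n k
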